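/- Let C' = Proj(k[t,a][x,y,z]/(zy² − x³ − z²x − z³)) and let C = Bl_{(t,x,z)} C' be the blow-up along the ideal (t,x,z). Then the rational map [t³y : at²x : z] : C' ⇢ ℙ² extends to a morphism f : C → ℙ², i.e., the inverse image ideal sheaf of (t³y, at²x, z) on C is invertible. -/

import Mathlib

/-!
On each chart of the blow-up, the equation of the strict transform of the cubic expresses the
chart coordinate `z₁` through the exceptional parameter: `z₁ = t² h` on the `t`-chart and
`z₁ = x² u` with `u ≡ 1 mod z₁` on the `x`-chart, while on the `z`-chart `z` becomes a unit. Hence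
every generator of the pulled-back ideal is a multiple of `t³`, resp. `x³`, which itself lies in
the ideal, and the exceptional parameter is a non-zero-divisor because it is a prime of the
polynomial ring that does not divide the equation.
-/

open MvPolynomial

theorem MvPolynomial.not_X_dvd_of_eval_ne_zero {σ R : Type*} [CommSemiring R] {i : σ}
    {g : MvPolynomial σ R} (x : σ → R) (hx : x i = 0) (hg : eval x g ≠ 0) : ¬ X i ∣ g := by
  rintro ⟨c, rfl⟩
  simp [hx] at hg

namespace Ideal.Quotient

variable {R : Type*} [CommRing R]

theorem mk_span_singleton_sub (a b : R) :
    mk (Ideal.span {a - b}) a = mk (Ideal.span {a - b}) b :=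
  Ideal.Quotient.eq.mpr (Ideal.mem_span_singleton_self _)

theorem mk_mem_nonZeroDivisors_of_prime [IsDomain R] {π g : R} (hπ : Prime π) (hg : ¬ π ∣ g) :
    mk (Ideal.span {g}) π ∈ nonZeroDivisors _ := by
  rw [mem_nonZeroDivisors_iff_right]
  intro y hy
  obtain ⟨p, rfl⟩ := mk_surjective y
  rw [← map_mul, eq_zero_iff_mem, Ideal.mem_span_singleton] at hy
  rw [eq_zero_iff_mem, Ideal.mem_span_singleton]
  obtain ⟨q, hq⟩ := hy
  obtain ⟨q', rfl⟩ := (hπ.dvd_or_dvd ⟨p, by rw [← hq]; ring⟩).resolve_left hg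
  exact ⟨q', mul_left_cancel₀ hπ.ne_zero (by linear_combination hq)⟩

end Ideal.Quotient

theorem Ideal.span_triple_eq_span_singleton {R : Type*} [CommSemiring R] {a b c d : R}
    (ha : d ∣ a) (hb : d ∣ b) (hc : d ∣ c) (hd : d ∈ Ideal.span {a, b, c}) :
    Ideal.span {a, b, c} = Ideal.span {d} := by
  refine le_antisymm ?_ (Ideal.span_singleton_le_iff_mem _ |>.mpr hd)
  simp [Ideal.span_le, Set.insert_subset_iff, Ideal.mem_span_singleton, ha, hb, hc]

theorem stmt2_general (k : Type*) [Field k] :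
    -- t-chart: ring k[t,a,x₁,z₁]/(z₁ − t²(x₁³ + z₁²x₁ + z₁³))
    (let I₁ : Ideal (MvPolynomial (Fin 4) k) :=
        Ideal.span {X 3 - X 0 ^ 2 * ((X 2) ^ 3 + (X 3) ^ 2 * X 2 + (X 3) ^ 3)}
     let ψ := Ideal.Quotient.mk I₁
     Ideal.span {ψ (X 0) ^ 3, ψ (X 1) * ψ (X 0) ^ 3 * ψ (X 2), ψ (X 0) * ψ (X 3)} =
        Ideal.span {ψ (X 0) ^ 3} ∧ ψ (X 0) ^ 3 ∈ nonZeroDivisors _) ∧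
    -- x-chart: ring k[t₁,a,x,z₁]/(z₁ − x²(1 + z₁² + z₁³))
    (let I₂ : Ideal (MvPolynomial (Fin 4) k) :=
        Ideal.span {X 3 - X 2 ^ 2 * (1 + (X 3) ^ 2 + (X 3) ^ 3)}
     let ψ := Ideal.Quotient.mk I₂
     Ideal.span {ψ (X 2) ^ 3 * ψ (X 0) ^ 3, ψ (X 1) * ψ (X 2) ^ 3 * ψ (X 0) ^ 2,
          ψ (X 2) * ψ (X 3)} = Ideal.span {ψ (X 2) ^ 3} ∧
        ψ (X 2) ^ 3 ∈ nonZeroDivisors _) ∧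
    -- z-chart: ring k[t₁,a,x₁,z]/(1 − z²(x₁³ + x₁ + 1))
    (let I₃ : Ideal (MvPolynomial (Fin 4) k) :=
        Ideal.span {1 - X 3 ^ 2 * ((X 2) ^ 3 + X 2 + 1)}
     let ψ := Ideal.Quotient.mk I₃
     Ideal.span {ψ (X 3) ^ 3 * ψ (X 0) ^ 3, ψ (X 1) * ψ (X 3) ^ 3 * ψ (X 0) ^ 2 * ψ (X 2),
          ψ (X 3)} = ⊤) := by
  refine ⟨?_, ?_, ?_⟩
  · intro I₁ ψ
    have hz : ψ (X 3) = ψ (X 0 ^ 2 * ((X 2) ^ 3 + (X 3) ^ 2 * X 2 + (X 3) ^ 3)) :=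
      Ideal.Quotient.mk_span_singleton_sub _ _
    simp only [map_mul, map_add, map_pow] at hz
    refine ⟨Ideal.span_triple_eq_span_singleton dvd_rfl ⟨ψ (X 1) * ψ (X 2), by ring⟩
      ⟨ψ (X 2) ^ 3 + ψ (X 3) ^ 2 * ψ (X 2) + ψ (X 3) ^ 3, by linear_combination ψ (X 0) * hz⟩
      (Ideal.subset_span (by simp)), pow_mem ?_ 3⟩
    exact Ideal.Quotient.mk_mem_nonZeroDivisors_of_prime X_prime
      (not_X_dvd_of_eval_ne_zero (Pi.single 3 1) (by simp) (by simp))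
  · intro I₂ ψ
    have hz : ψ (X 3) = ψ (X 2 ^ 2 * (1 + (X 3) ^ 2 + (X 3) ^ 3)) :=
      Ideal.Quotient.mk_span_singleton_sub _ _
    simp only [map_mul, map_add, map_pow, map_one] at hz
    have hcube : ψ (X 2) ^ 3 =
        ψ (X 2) * ψ (X 3) * (1 - ψ (X 2) ^ 2 * ψ (X 3) - ψ (X 2) ^ 2 * ψ (X 3) ^ 2) := by
      linear_combination (-ψ (X 2)) * hz
    refine ⟨Ideal.span_triple_eq_span_singleton (dvd_mul_right _ _)
      ⟨ψ (X 1) * ψ (X 0) ^ 2, by ring⟩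
      ⟨1 + ψ (X 3) ^ 2 + ψ (X 3) ^ 3, by linear_combination ψ (X 2) * hz⟩
      (hcube ▸ Ideal.mul_mem_right _ _ (Ideal.subset_span (by simp))), pow_mem ?_ 3⟩
    exact Ideal.Quotient.mk_mem_nonZeroDivisors_of_prime X_prime
      (not_X_dvd_of_eval_ne_zero (Pi.single 3 1) (by simp) (by simp))
  · intro I₃ ψ
    have hz : ψ 1 = ψ (X 3 ^ 2 * ((X 2) ^ 3 + X 2 + 1)) :=
      Ideal.Quotient.mk_span_singleton_sub _ _
    simp only [map_mul, map_add, map_pow, map_one] at hz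
    refine Ideal.eq_top_of_isUnit_mem _ (x := ψ (X 3)) (Ideal.subset_span (by simp)) ?_
    exact IsUnit.of_mul_eq_one (ψ (X 3) * (ψ (X 2) ^ 3 + ψ (X 2) + 1))
      (by linear_combination -hz)

/-- On the blow-up C = Bl_{(t,x,z)} C' of
C' = Proj(k[t,a][x,y,z]/(zy² − x³ − z²x − z³)), the rational map [t³y : at²x : z]
extends to a morphism C → ℙ²: the inverse image ideal of (t³y, at²x, z) is invertible.
Concretely, near the indeterminacy point (which lies in the affine chart y = 1, where
the curve is z = x³ + z²x + z³), on each of the three standard charts of the blow-up of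
the ideal (t, x, z) the inverse image ideal is principal, generated by a non-zero-divisor.
Chart variables are indexed by Fin 4.  t-chart (x = t·x₁, z = t·z₁, vars t,a,x₁,z₁):
the ideal (t³, at³x₁, tz₁) equals (t³).  x-chart (t = x·t₁, z = x·z₁, vars t₁,a,x,z₁):
the ideal (x³t₁³, ax³t₁², xz₁) equals (x³).  z-chart (t = z·t₁, x = z·x₁, vars
t₁,a,x₁,z): the ideal (z³t₁³, az³t₁²x₁, z) is the unit ideal. -/
theorem stmt2 (k : Type*) [Field k] [IsAlgClosed k] :
    -- t-chart: ring k[t,a,x₁,z₁]/(z₁ − t²(x₁³ + z₁²x₁ + z₁³))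
    (let I₁ : Ideal (MvPolynomial (Fin 4) k) :=
        Ideal.span {X 3 - X 0 ^ 2 * ((X 2) ^ 3 + (X 3) ^ 2 * X 2 + (X 3) ^ 3)}
     let ψ := Ideal.Quotient.mk I₁
     Ideal.span {ψ (X 0) ^ 3, ψ (X 1) * ψ (X 0) ^ 3 * ψ (X 2), ψ (X 0) * ψ (X 3)} =
        Ideal.span {ψ (X 0) ^ 3} ∧ ψ (X 0) ^ 3 ∈ nonZeroDivisors _) ∧
    -- x-chart: ring k[t₁,a,x,z₁]/(z₁ − x²(1 + z₁² + z₁³))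
    (let I₂ : Ideal (MvPolynomial (Fin 4) k) :=
        Ideal.span {X 3 - X 2 ^ 2 * (1 + (X 3) ^ 2 + (X 3) ^ 3)}
     let ψ := Ideal.Quotient.mk I₂
     Ideal.span {ψ (X 2) ^ 3 * ψ (X 0) ^ 3, ψ (X 1) * ψ (X 2) ^ 3 * ψ (X 0) ^ 2,
          ψ (X 2) * ψ (X 3)} = Ideal.span {ψ (X 2) ^ 3} ∧
        ψ (X 2) ^ 3 ∈ nonZeroDivisors _) ∧
    -- z-chart: ring k[t₁,a,x₁,z]/(1 − z²(x₁³ + x₁ + 1))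
    (let I₃ : Ideal (MvPolynomial (Fin 4) k) :=
        Ideal.span {1 - X 3 ^ 2 * ((X 2) ^ 3 + X 2 + 1)}
     let ψ := Ideal.Quotient.mk I₃
     Ideal.span {ψ (X 3) ^ 3 * ψ (X 0) ^ 3, ψ (X 1) * ψ (X 3) ^ 3 * ψ (X 0) ^ 2 * ψ (X 2),
          ψ (X 3)} = ⊤) :=
  stmt2_general k
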